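/- arXiv:2303.05783 — 2 statements merged into one kernel-verified Lean document; each statement's English description precedes it below -/
import Mathlib

section
/- Let A be the unique solution on [0,T) of −Ȧ_t = −A_t²/η_t + λ_t with lim_{t↗T} A_t = ∞. Then the map t ↦ A_t·exp(−∫_0^t A_r/η_r dr) is non-increasing on [0,T), and its limit α⁰_T := lim_{t↗T} A_t·exp(−∫_0^t A_r/η_r dr) exists and lies in (0,∞). -/
open MeasureTheory intervalIntegral Set Filter Topology

noncomputable section

structure Coeffs (T : ℝ) where
  lam : ℝ → ℝ
  kap : ℝ → ℝ
  kap' : ℝ → ℝ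
  eta : ℝ → ℝ
  eta' : ℝ → ℝ
  lam_meas : Measurable lam
  lam_bdd : ∃ M, ∀ t ∈ Set.Icc (0:ℝ) T, |lam t| ≤ M
  lam_nonneg : ∀ t ∈ Set.Icc (0:ℝ) T, 0 ≤ lam t
  kap_hasDeriv : ∀ t ∈ Set.Icc (0:ℝ) T, HasDerivWithinAt kap (kap' t) (Set.Icc (0:ℝ) T) t
  kap'_cont : ContinuousOn kap' (Set.Icc (0:ℝ) T)
  kap_nonneg : ∀ t ∈ Set.Icc (0:ℝ) T, 0 ≤ kap t
  eta_hasDeriv : ∀ t ∈ Set.Icc (0:ℝ) T, HasDerivWithinAt eta (eta' t) (Set.Icc (0:ℝ) T) t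
  eta'_cont : ContinuousOn eta' (Set.Icc (0:ℝ) T)
  eta_pos : ∀ t ∈ Set.Icc (0:ℝ) T, 0 < eta t

/-- `A` solves the Riccati terminal value problem
`-Ȧ_t = -A_t^2/η_t + δ·(κ_t/η_t)·A_t + λ_t` on `[0,T)` (in integral form, which encodes
absolute continuity with the stated derivative a.e.) with singular terminal condition
`lim_{t↗T} A_t = ∞`. -/
def IsRiccatiSol (T δ : ℝ) (C : Coeffs T) (A : ℝ → ℝ) : Prop :=
  ContinuousOn A (Set.Ico 0 T) ∧
  (∀ s ∈ Set.Ico (0:ℝ) T, ∀ t ∈ Set.Ico (0:ℝ) T,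
    A t = A s + ∫ r in s..t, (A r ^ 2 / C.eta r - δ * (C.kap r / C.eta r) * A r - C.lam r)) ∧
  Filter.Tendsto A (nhdsWithin T (Set.Iio T)) Filter.atTop

/-- The function `h^δ`. -/
def hFun (T δ : ℝ) (C : Coeffs T) (A : ℝ → ℝ) (t : ℝ) : ℝ :=
  Real.exp (-∫ r in (0:ℝ)..t, A r / C.eta r) *
    ∫ s in (0:ℝ)..t, (1 / C.eta s) * Real.exp (∫ r in (0:ℝ)..s, (2 * A r - δ * C.kap r) / C.eta r)

/-- `f_μ(t) = ∫_0^t κ_u μ_u h^δ_u du`. -/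
def fMu (T δ : ℝ) (C : Coeffs T) (A μ : ℝ → ℝ) (t : ℝ) : ℝ :=
  ∫ u in (0:ℝ)..t, C.kap u * μ u * hFun T δ C A u

/-- Running maximum `f̄_μ(t) = max_{0 ≤ s ≤ t} f_μ(s)`. -/
def fBar (T δ : ℝ) (C : Coeffs T) (A μ : ℝ → ℝ) (t : ℝ) : ℝ :=
  sSup (fMu T δ C A μ '' Set.Icc 0 t)

/-- Running minimum `f̲_μ(t) = min_{0 ≤ s ≤ t} f_μ(s)`. -/
def fUnd (T δ : ℝ) (C : Coeffs T) (A μ : ℝ → ℝ) (t : ℝ) : ℝ :=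
  sInf (fMu T δ C A μ '' Set.Icc 0 t)

/-- The candidate liquidation time `τ_μ(x)`, with the convention `inf ∅ = T`. -/
def tauMu (T δ : ℝ) (C : Coeffs T) (A μ : ℝ → ℝ) (x : ℝ) : ℝ :=
  sInf (insert T {t ∈ Set.Icc (0:ℝ) T |
    fMu T δ C A μ t = max (min x (fBar T δ C A μ T)) (fUnd T δ C A μ T)})

/-- `(X, Y)` is a (continuous) solution of the forward-backward system
`Ẋ_t = -((Y_t - δκ_t X_t)/η_t)·1_{t ≤ τ}`, `-Ẏ_t = (λ_t X_t + κ_t μ_t)·1_{t ≤ τ}` for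
a.e. `t ∈ [0,T]` (in integral form), with `X_0 = x` and `X_T = 0`. -/
def IsFBSol (T δ : ℝ) (C : Coeffs T) (μ : ℝ → ℝ) (x τ : ℝ) (X Y : ℝ → ℝ) : Prop :=
  ContinuousOn X (Set.Icc 0 T) ∧ ContinuousOn Y (Set.Icc 0 T) ∧
  X 0 = x ∧ X T = 0 ∧
  (∀ t ∈ Set.Icc (0:ℝ) T,
    X t = x - ∫ s in (0:ℝ)..t,
      ((Y s - δ * C.kap s * X s) / C.eta s) * Set.indicator (Set.Iic τ) (fun _ => (1:ℝ)) s) ∧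
  (∀ t ∈ Set.Icc (0:ℝ) T,
    Y t = Y T + ∫ s in t..T,
      (C.lam s * X s + C.kap s * μ s) * Set.indicator (Set.Iic τ) (fun _ => (1:ℝ)) s)

/-- The candidate strategy `ξ = (Y - δκX)/η`. -/
def xiC (T δ : ℝ) (C : Coeffs T) (X Y : ℝ → ℝ) (t : ℝ) : ℝ :=
  (Y t - δ * C.kap t * X t) / C.eta t

/-- The admissible set `𝒜_x`: square-integrable strategies whose portfolio process is
absorbed at zero and satisfies the liquidation constraint. -/
def Admissible (T x : ℝ) (ξ : ℝ → ℝ) : Prop :=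
  MeasureTheory.MemLp ξ 2 (MeasureTheory.volume.restrict (Set.Icc 0 T)) ∧
  ∃ τ ∈ Set.Ioc (0:ℝ) T,
    (∀ t ∈ Set.Ico (0:ℝ) τ, x - ∫ s in (0:ℝ)..t, ξ s ≠ 0) ∧
    (∀ t ∈ Set.Icc τ T, x - ∫ s in (0:ℝ)..t, ξ s = 0)

/-- The cost functional `J(ξ; μ)` of the representative player with initial position `x`. -/
def Jcost (T : ℝ) (C : Coeffs T) (μ ξ : ℝ → ℝ) (x : ℝ) : ℝ :=
  ∫ t in (0:ℝ)..T, ((1/2) * C.eta t * ξ t ^ 2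
    + C.kap t * μ t * (x - ∫ s in (0:ℝ)..t, ξ s)
    + (1/2) * C.lam t * (x - ∫ s in (0:ℝ)..t, ξ s) ^ 2)

/-- Right tail distribution function `q₀(x) = ν([x,∞))`. -/
def q0 (ν : Measure ℝ) (x : ℝ) : ℝ := (ν (Set.Ici x)).toReal

/-- Left tail distribution function `p₀(x) = ν((-∞,x])`. -/
def p0 (ν : Measure ℝ) (x : ℝ) : ℝ := (ν (Set.Iic x)).toReal

/-- Supremum norm on `[0,T]`. -/
def supNorm (T : ℝ) (f : ℝ → ℝ) : ℝ := sSup ((fun t => |f t|) '' Set.Icc 0 T)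

/-- Essential supremum norm on `[0,T]`. -/
def essSupNorm (T : ℝ) (f : ℝ → ℝ) : ℝ :=
  (MeasureTheory.eLpNorm f ⊤ (MeasureTheory.volume.restrict (Set.Icc 0 T))).toReal


/-! Write `D_t = exp (-∫₀ᵗ A/η)`. With `δ = 0` the `A²/η` terms of `(A D)'` cancel, so
`(A D)' = -λ D ≤ 0` almost everywhere. As `λ` is merely bounded and measurable, `A` is only
absolutely continuous, and this is integrated with the product rule for absolutely continuous
functions. Hence `A D` is non-increasing on `[0, T)` and has a limit at `T`. The limit is positive:
if `|λ| ≤ M` and `A ≥ M T + 1` on `[s, T)`, then `D` decreases on `[s, T)`, and so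
`A_t D_t ≥ D_s (A_s - M (t - s)) ≥ D_s` there. -/

theorem AbsolutelyContinuousOnInterval.const_add_intervalIntegral {f : ℝ → ℝ} {a b : ℝ}
    (c : ℝ) (hf : IntervalIntegrable f volume a b) :
    AbsolutelyContinuousOnInterval (fun x => c + ∫ y in a..x, f y) a b :=
  (LipschitzWith.const c).lipschitzOnWith.absolutelyContinuousOnInterval.add
    (hf.absolutelyContinuousOnInterval_intervalIntegral left_mem_uIcc)

theorem integral_mul_add_mul_eq_sub_of_eq_primitive {f g f' g' : ℝ → ℝ} {a b : ℝ}
    (hf' : IntervalIntegrable f' volume a b) (hg' : IntervalIntegrable g' volume a b)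
    (hf : ∀ x ∈ uIcc a b, f x = f a + ∫ y in a..x, f' y)
    (hg : ∀ x ∈ uIcc a b, g x = g a + ∫ y in a..x, g' y) :
    ∫ x in a..b, (f' x * g x + f x * g' x) = f b * g b - f a * g a := by
  have hF := AbsolutelyContinuousOnInterval.const_add_intervalIntegral (f a) hf'
  have hG := AbsolutelyContinuousOnInterval.const_add_intervalIntegral (g a) hg'
  have key := hF.integral_deriv_mul_eq_sub hG
  rw [← hf a left_mem_uIcc, ← hg a left_mem_uIcc, ← hf b right_mem_uIcc,
    ← hg b right_mem_uIcc] at key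
  rw [← key]
  refine intervalIntegral.integral_congr_ae ?_
  filter_upwards [hf'.ae_hasDerivAt_integral, hg'.ae_hasDerivAt_integral] with x hdf hdg hx
  have hx' : x ∈ uIcc a b := uIoc_subset_uIcc hx
  rw [((hdf hx' a left_mem_uIcc).const_add (f a)).deriv,
    ((hdg hx' a left_mem_uIcc).const_add (g a)).deriv, hf x hx', hg x hx']

variable {T : ℝ}

theorem Coeffs.continuousOn_eta (C : Coeffs T) : ContinuousOn C.eta (Icc 0 T) :=
  fun t ht => (C.eta_hasDeriv t ht).continuousWithinAt

theorem Coeffs.intervalIntegrable_lam (C : Coeffs T) {a b : ℝ} (ha : 0 ≤ a) (hab : a ≤ b)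
    (hb : b ≤ T) : IntervalIntegrable C.lam volume a b := by
  obtain ⟨M, hM⟩ := C.lam_bdd
  have h : IntegrableOn C.lam (Icc a b) :=
    Measure.integrableOn_of_bounded measure_Icc_lt_top.ne C.lam_meas.aestronglyMeasurable
      (by filter_upwards [ae_restrict_mem measurableSet_Icc] with r hr
          using hM r ⟨ha.trans hr.1, hr.2.trans hb⟩)
  exact IntegrableOn.intervalIntegrable (by rwa [uIcc_of_le hab])

theorem Coeffs.continuousOn_div_eta (C : Coeffs T) {A : ℝ → ℝ}
    (hA : ContinuousOn A (Ico 0 T)) :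
    ContinuousOn (fun r => A r / C.eta r) (Ico 0 T) :=
  hA.div (C.continuousOn_eta.mono Ico_subset_Icc_self)
    fun r hr => (C.eta_pos r (Ico_subset_Icc_self hr)).ne'

def discount (C : Coeffs T) (A : ℝ → ℝ) (t : ℝ) : ℝ :=
  Real.exp (-∫ r in (0:ℝ)..t, A r / C.eta r)

section Discount

variable {C : Coeffs T} {A : ℝ → ℝ}

theorem discount_pos (t : ℝ) : 0 < discount C A t := Real.exp_pos _

theorem continuousOn_discount (hA : ContinuousOn A (Ico 0 T)) {t : ℝ} (ht : t < T) :
    ContinuousOn (discount C A) (Icc 0 t) := by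
  rcases lt_or_ge t 0 with ht0 | ht0
  · simp [Icc_eq_empty_of_lt ht0]
  have hsub : uIcc 0 t ⊆ Ico 0 T := by
    rw [uIcc_of_le ht0]; exact fun r hr => ⟨hr.1, hr.2.trans_lt ht⟩
  have := intervalIntegral.continuousOn_primitive_interval
    (((C.continuousOn_div_eta hA).mono hsub).integrableOn_compact (μ := volume) isCompact_uIcc)
  rw [uIcc_of_le ht0] at this
  exact this.neg.rexp

theorem hasDerivAt_discount (hA : ContinuousOn A (Ico 0 T)) {t : ℝ} (ht : t ∈ Ioo 0 T) :
    HasDerivAt (discount C A) (-(A t / C.eta t) * discount C A t) t := by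
  have hcont : ContinuousOn (fun r => A r / C.eta r) (Ioo 0 T) :=
    (C.continuousOn_div_eta hA).mono Ioo_subset_Ico_self
  have hprim : HasDerivAt (fun x => ∫ r in (0:ℝ)..x, A r / C.eta r) (A t / C.eta t) t :=
    intervalIntegral.integral_hasDerivAt_right
      (((C.continuousOn_div_eta hA).mono fun r hr => ?_).intervalIntegrable)
      (hcont.stronglyMeasurableAtFilter isOpen_Ioo t ht)
      (hcont.continuousAt (Ioo_mem_nhds ht.1 ht.2))
  · exact hprim.neg.exp.congr_deriv (mul_comm _ _)
  · rw [uIcc_of_le ht.1.le] at hr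
    exact ⟨hr.1, hr.2.trans_lt ht.2⟩

theorem discount_eq_add_integral (hA : ContinuousOn A (Ico 0 T)) {s t : ℝ} (hs : 0 ≤ s)
    (hst : s ≤ t) (ht : t < T) :
    discount C A t = discount C A s + ∫ r in s..t, -(A r / C.eta r) * discount C A r := by
  have hcont : ContinuousOn (discount C A) (Icc s t) :=
    (continuousOn_discount hA ht).mono (Icc_subset_Icc_left hs)
  rw [intervalIntegral.integral_eq_sub_of_hasDerivAt_of_le hst hcont
    (fun r hr => hasDerivAt_discount hA ⟨hs.trans_lt hr.1, hr.2.trans ht⟩)]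
  · ring
  · refine ContinuousOn.intervalIntegrable ?_
    rw [uIcc_of_le hst]
    exact ((C.continuousOn_div_eta hA).mono
      fun r hr => ⟨hs.trans hr.1, hr.2.trans_lt ht⟩).neg.mul hcont

theorem intervalIntegrable_lam_mul_discount (hA : ContinuousOn A (Ico 0 T)) {s t : ℝ}
    (hs : 0 ≤ s) (hst : s ≤ t) (ht : t < T) :
    IntervalIntegrable (fun r => C.lam r * discount C A r) volume s t :=
  (C.intervalIntegrable_lam hs hst ht.le).mul_continuousOn <| by
    rw [uIcc_of_le hst]; exact (continuousOn_discount hA ht).mono (Icc_subset_Icc_left hs)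

theorem discount_le_discount (hA : ContinuousOn A (Ico 0 T)) {s t : ℝ} (hs : 0 ≤ s)
    (hst : s ≤ t) (ht : t < T) (hA_nonneg : ∀ r ∈ Icc s t, 0 ≤ A r) :
    discount C A t ≤ discount C A s := by
  rw [discount_eq_add_integral hA hs hst ht]
  simp only [neg_mul, intervalIntegral.integral_neg]
  refine add_le_of_nonpos_right <| neg_nonpos.2 <|
    intervalIntegral.integral_nonneg hst fun r hr => mul_nonneg (div_nonneg (hA_nonneg r hr)
      (C.eta_pos r ⟨hs.trans hr.1, hr.2.trans ht.le⟩).le) (discount_pos r).le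

end Discount

namespace IsRiccatiSol

variable {C : Coeffs T} {A : ℝ → ℝ}

theorem mul_discount_eq (hA : IsRiccatiSol T 0 C A) {s t : ℝ} (hs : 0 ≤ s) (hst : s ≤ t)
    (ht : t < T) :
    A t * discount C A t = A s * discount C A s - ∫ r in s..t, C.lam r * discount C A r := by
  obtain ⟨hcont, hint, -⟩ := hA
  have hsub : Icc s t ⊆ Icc 0 T := Icc_subset_Icc hs ht.le
  have hsub' : Icc s t ⊆ Ico 0 T := fun r hr => ⟨hs.trans hr.1, hr.2.trans_lt ht⟩
  have hA' : IntervalIntegrable (fun r => A r ^ 2 / C.eta r - C.lam r) volume s t := by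
    refine ContinuousOn.intervalIntegrable ?_ |>.sub (C.intervalIntegrable_lam hs hst ht.le)
    rw [uIcc_of_le hst]
    exact ((hcont.mono hsub').pow 2).div (C.continuousOn_eta.mono hsub)
      fun r hr => (C.eta_pos r (hsub hr)).ne'
  have hD' : IntervalIntegrable (fun r => -(A r / C.eta r) * discount C A r) volume s t := by
    refine ContinuousOn.intervalIntegrable ?_
    rw [uIcc_of_le hst]
    exact ((C.continuousOn_div_eta hcont).mono hsub').neg.mul
      ((continuousOn_discount hcont ht).mono (Icc_subset_Icc_left hs))
  have key := integral_mul_add_mul_eq_sub_of_eq_primitive hA' hD'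
    (fun x hx => by
      rw [uIcc_of_le hst] at hx
      simpa only [zero_mul, sub_zero] using hint s ⟨hs, hst.trans_lt ht⟩ x (hsub' hx))
    (fun x hx => by
      rw [uIcc_of_le hst] at hx
      exact discount_eq_add_integral hcont hs hx.1 (hx.2.trans_lt ht))
  have hintegrand : ∀ r, (A r ^ 2 / C.eta r - C.lam r) * discount C A r
      + A r * (-(A r / C.eta r) * discount C A r) = -(C.lam r * discount C A r) :=
    fun r => by ring
  simp only [hintegrand, intervalIntegral.integral_neg] at key
  linarith

theorem antitoneOn_mul_discount (hA : IsRiccatiSol T 0 C A) :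
    AntitoneOn (fun t => A t * discount C A t) (Ico 0 T) := by
  intro s hs t ht hst
  simp only [hA.mul_discount_eq hs.1 hst ht.2]
  refine sub_le_self _ (intervalIntegral.integral_nonneg hst fun r hr => ?_)
  exact mul_nonneg (C.lam_nonneg r ⟨hs.1.trans hr.1, hr.2.trans ht.2.le⟩) (discount_pos r).le

theorem exists_pos_le_mul_discount (hT : 0 < T) (hA : IsRiccatiSol T 0 C A) :
    ∃ s ∈ Ico 0 T, ∃ c > 0, ∀ t ∈ Ico s T, c ≤ A t * discount C A t := by
  obtain ⟨M, hM⟩ := C.lam_bdd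
  have hM0 : 0 ≤ M := (abs_nonneg _).trans (hM 0 ⟨le_rfl, hT.le⟩)
  obtain ⟨l, hlT, hl⟩ := mem_nhdsLT_iff_exists_Ioo_subset.1
    (inter_mem (Ioo_mem_nhdsLT hT) (hA.2.2.eventually_ge_atTop (M * T + 1)))
  obtain ⟨s, hls, hsT⟩ := exists_between (α := ℝ) hlT
  have hlarge : ∀ r ∈ Ico s T, 0 < r ∧ M * T + 1 ≤ A r :=
    fun r hr => have h := hl ⟨hls.trans_le hr.1, hr.2⟩; ⟨h.1.1, h.2⟩
  have hs0 : 0 ≤ s := (hlarge s ⟨le_rfl, hsT⟩).1.le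
  refine ⟨s, ⟨hs0, hsT⟩, discount C A s, discount_pos s, fun t ht => ?_⟩
  have hdecay : ∀ r ∈ Icc s t, discount C A r ≤ discount C A s :=
    fun r hr => discount_le_discount hA.1 hs0 hr.1 (hr.2.trans_lt ht.2) fun u hu => by
      nlinarith [(hlarge u ⟨hu.1, hu.2.trans_lt (hr.2.trans_lt ht.2)⟩).2]
  have hlam : ∫ r in s..t, C.lam r * discount C A r ≤ M * ((t - s) * discount C A s) := by
    simpa using intervalIntegral.integral_mono_on ht.1
      (intervalIntegrable_lam_mul_discount hA.1 hs0 ht.1 ht.2) intervalIntegrable_const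
      fun r hr => mul_le_mul
        ((le_abs_self _).trans (hM r ⟨hs0.trans hr.1, hr.2.trans ht.2.le⟩))
        (hdecay r hr) (discount_pos r).le hM0
  have hDs := (discount_pos (C := C) (A := A) s).le
  have hlen : (t - s) * M ≤ T * M := mul_le_mul_of_nonneg_right (by linarith [ht.2]) hM0
  rw [hA.mul_discount_eq hs0 ht.1 ht.2]
  nlinarith [mul_le_mul_of_nonneg_right hlen hDs,
    mul_le_mul_of_nonneg_right (hlarge s ⟨le_rfl, hsT⟩).2 hDs]

end IsRiccatiSol

/-- For the solution `A` of the Riccati problem with `δ = 0`, the map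
`t ↦ A_t · exp(-∫_0^t A_r/η_r dr)` is non-increasing on `[0,T)`, and its limit
`α⁰_T` as `t ↗ T` exists and lies in `(0,∞)`. -/
theorem stmt_1 (T : ℝ) (hT : 0 < T) (C : Coeffs T)
    (A : ℝ → ℝ) (hA : IsRiccatiSol T 0 C A) :
    (∀ s ∈ Set.Ico (0:ℝ) T, ∀ t ∈ Set.Ico (0:ℝ) T, s ≤ t →
      A t * Real.exp (-∫ r in (0:ℝ)..t, A r / C.eta r) ≤
        A s * Real.exp (-∫ r in (0:ℝ)..s, A r / C.eta r)) ∧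
    (∃ α : ℝ, 0 < α ∧
      Filter.Tendsto (fun t => A t * Real.exp (-∫ r in (0:ℝ)..t, A r / C.eta r))
        (nhdsWithin T (Set.Iio T)) (nhds α)) := by
  have hanti := hA.antitoneOn_mul_discount
  obtain ⟨s, hs, c, hc, hle⟩ := hA.exists_pos_le_mul_discount hT
  have hne : (Ioo s T).Nonempty := nonempty_Ioo.2 hs.2
  have hlow : ∀ y ∈ (fun t => A t * discount C A t) '' Ioo s T, c ≤ y :=
    forall_mem_image.2 fun t ht => hle t ⟨ht.1.le, ht.2⟩
  refine ⟨hanti, _, hc.trans_le (le_csInf (hne.image _) hlow), ?_⟩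
  exact (hanti.mono fun t ht => ⟨hs.1.trans ht.1.le, ht.2⟩).tendsto_nhdsWithin_Ioo_left hne
    ⟨c, hlow⟩

end
end

section
/- Let δ ∈ [0,1], x ∈ ℝ and μ ∈ L¹([0,T]), and let X be defined by X_t := [ x·exp(−∫_0^t (A^δ_r − δκ_r)/η_r dr) − ∫_0^t (1/η_s)·exp(−∫_s^t (A^δ_r − δκ_r)/η_r dr)·(∫_s^{τ_μ(x)} κ_u·μ_u·exp(−∫_s^u A^δ_r/η_r dr) du) ds ]·1_{{t ≤ τ_μ(x)}}. If τ_μ(x) = T, then lim_{t↗T} X_t = 0. -/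
open MeasureTheory intervalIntegral Set Filter Topology

noncomputable section

/-!
Near `T` the Riccati equation gives `A' ≤ A² / η_min` (the other terms have a favourable sign),
and comparison with the explicit blow-up solution `B' = c B²` shows `A_t ≥ k / (T - t)`. Hence the
rate `p = (A - δκ) / η` also dominates `k / (T - t)`, so `∫₀ᵗ p` diverges logarithmically and
`p → ∞`. Writing `X_t = exp (-∫₀ᵗ p) (x - ∫₀ᵗ Φ)`, the inner integral in `Φ` is bounded because
`A ≥ 0` near `T`, so `|Φ_s| ≤ C exp (∫₀ˢ p)`; on a final stretch where `p ≥ N` one has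
`∫ exp (∫₀ˢ p) ds ≤ exp (∫₀ᵗ p) / N`, so that stretch contributes at most `C / N` to `X_t`,
while everything else decays like `exp (-∫₀ᵗ p)`.
-/

theorem exists_mem_Ico_forall_of_eventually {P : ℝ → Prop} {a T : ℝ} (haT : a < T)
    (h : ∀ᶠ t in 𝓝[<] T, P t) : ∃ s ∈ Ico a T, ∀ t ∈ Ico s T, P t := by
  obtain ⟨l, hlT, hl⟩ := mem_nhdsLT_iff_exists_Ico_subset.mp h
  exact ⟨max l a, ⟨le_max_right l a, max_lt hlT haT⟩,
    fun t ht => hl ⟨(le_max_left l a).trans ht.1, ht.2⟩⟩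

section Primitive

variable {p : ℝ → ℝ} {a T : ℝ}

theorem ContinuousOn.intervalIntegrable_of_mem_Ico (hp : ContinuousOn p (Ico a T)) {s t : ℝ}
    (hs : s ∈ Ico a T) (ht : t ∈ Ico a T) : IntervalIntegrable p volume s t :=
  (hp.mono (ordConnected_Ico.uIcc_subset hs ht)).intervalIntegrable

theorem continuousOn_primitive_Ico (hp : ContinuousOn p (Ico a T)) :
    ContinuousOn (fun t => ∫ r in a..t, p r) (Ico a T) := by
  intro t ht
  obtain ⟨b, htb, hbT⟩ := exists_between ht.2
  have hab : a ≤ b := ht.1.trans htb.le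
  have hcont : ContinuousOn (fun t => ∫ r in a..t, p r) (Icc a b) := by
    rw [← uIcc_of_le hab]
    exact continuousOn_primitive_interval ((hp.mono (uIcc_of_le hab ▸
      Icc_subset_Ico_right hbT)).integrableOn_compact (μ := volume) isCompact_uIcc)
  refine (hcont t ⟨ht.1, htb.le⟩).mono_of_mem_nhdsWithin ?_
  exact mem_nhdsWithin.mpr ⟨Iio b, isOpen_Iio, htb, fun r hr => ⟨hr.2.1, hr.1.le⟩⟩

theorem hasDerivAt_primitive_of_mem_Ioo (hp : ContinuousOn p (Ico a T)) {u : ℝ}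
    (hu : u ∈ Ioo a T) : HasDerivAt (fun t => ∫ r in a..t, p r) (p u) u :=
  integral_hasDerivAt_right (hp.intervalIntegrable_of_mem_Ico ⟨le_rfl, hu.1.trans hu.2⟩
      (Ioo_subset_Ico_self hu))
    ((hp.mono Ioo_subset_Ico_self).stronglyMeasurableAtFilter isOpen_Ioo u hu)
    ((hp.mono Ioo_subset_Ico_self).continuousAt (isOpen_Ioo.mem_nhds hu))

end Primitive

theorem eventually_slope_lt_of_sub_le_integral {f F : ℝ → ℝ} {x b r : ℝ} (hxb : x < b)
    (hF : ContinuousOn F (Ico x b)) (hle : ∀ z ∈ Ioo x b, f z - f x ≤ ∫ u in x..z, F u)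
    (hr : F x < r) : ∀ᶠ z in 𝓝[>] x, slope f x z < r := by
  have hderiv : HasDerivWithinAt (fun z => ∫ u in x..z, F u) (F x) (Ioi x) x :=
    (integral_hasDerivWithinAt_right (IntervalIntegrable.refl)
      (nhdsWithin_Ioo_eq_nhdsGT hxb ▸
        (hF.mono Ioo_subset_Ico_self).stronglyMeasurableAtFilter_nhdsWithin measurableSet_Ioo x)
      ((hF x ⟨le_rfl, hxb⟩).mono_of_mem_nhdsWithin (Ico_mem_nhdsGT hxb))).mono Ioi_subset_Ici_self
  have hslope := (hasDerivWithinAt_iff_tendsto_slope' (lt_irrefl x)).mp hderiv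
  filter_upwards [hslope.eventually (gt_mem_nhds hr), Ioo_mem_nhdsGT hxb] with z hz hzI
  rw [slope_def_field] at hz ⊢
  simp only [integral_same, sub_zero] at hz
  exact lt_of_le_of_lt (div_le_div_of_nonneg_right (hle z hzI) (sub_nonneg.mpr hzI.1.le)) hz

theorem one_le_mul_mul_sub_of_sub_le_integral_sq {A : ℝ → ℝ} {c s T : ℝ} (hc : 0 < c)
    (hsT : s < T) (hA : ContinuousOn A (Ico s T))
    (hle : ∀ x ∈ Ico s T, ∀ z ∈ Ioo x T, A z - A x ≤ ∫ r in x..z, c * A r ^ 2)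
    (htop : Tendsto A (𝓝[<] T) atTop) (hAs : 0 < A s) : 1 ≤ c * A s * (T - s) := by
  by_contra! h
  obtain ⟨c', hcc', hc'⟩ : ∃ c', c < c' ∧ c' * A s * (T - s) < 1 := by
    obtain ⟨c', h1, h2⟩ := exists_between ((lt_div_iff₀ (by nlinarith)).mpr
      (by linarith : c * (A s * (T - s)) < 1))
    exact ⟨c', h1, by rwa [lt_div_iff₀ (by nlinarith), ← mul_assoc] at h2⟩
  -- `B` solves `B' = c' B²` with `B s = A s`, and stays bounded on `[s, T]`.
  set B : ℝ → ℝ := fun t => A s / (1 - c' * A s * (t - s)) with hBdef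
  have hden : ∀ t ≤ T, 0 < 1 - c' * A s * (t - s) := fun t ht => by
    have : c' * A s * (t - s) ≤ c' * A s * (T - s) :=
      mul_le_mul_of_nonneg_left (by linarith) (by nlinarith)
    linarith
  have hB : ∀ t ≤ T, HasDerivAt B (c' * B t ^ 2) t := fun t ht => by
    have hd : HasDerivAt (fun t => 1 - c' * A s * (t - s)) (-(c' * A s)) t := by
      simpa using ((hasDerivAt_id t).sub_const s).const_mul (c' * A s) |>.const_sub 1
    refine ((hd.inv (hden t ht).ne').const_mul (A s)).congr_deriv ?_
    simp only [hBdef]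
    field_simp
  have hBle : ∀ t ∈ Icc s T, B t ≤ B T := fun t ht =>
    div_le_div_of_nonneg_left hAs.le (hden T le_rfl)
      (by nlinarith [ht.2, mul_pos (hc.trans hcc') hAs])
  have hAB : ∀ t ∈ Ico s T, A t ≤ B t := by
    intro t ht
    refine image_le_of_liminf_slope_right_lt_deriv_boundary' (f' := fun x => c * A x ^ 2)
      (hA.mono (Icc_subset_Ico_right ht.2)) ?_ (by simp [hBdef])
      (fun x hx => (hB x (hx.2.trans ht.2.le)).continuousAt.continuousWithinAt)
      (fun x hx => (hB x (hx.2.le.trans ht.2.le)).hasDerivWithinAt) ?_ ⟨ht.1, le_rfl⟩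
    · intro x hx r hr
      exact (eventually_slope_lt_of_sub_le_integral (hx.2.trans ht.2)
        ((continuousOn_const.mul (hA.pow 2)).mono (Ico_subset_Ico_left hx.1))
        (hle x ⟨hx.1, hx.2.trans ht.2⟩) hr).frequently
    · intro x hx hABx
      have hBx : 0 < B x := div_pos hAs (hden x (hx.2.le.trans ht.2.le))
      simp only [hABx]
      exact mul_lt_mul_of_pos_right hcc' (by positivity)
  obtain ⟨t, hAt, htI⟩ := ((htop.eventually_gt_atTop (B T)).and (Ioo_mem_nhdsLT hsT)).exists
  linarith [hAB t ⟨htI.1.le, htI.2⟩, hBle t ⟨htI.1.le, htI.2.le⟩]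

theorem tendsto_div_sub_nhdsLT_atTop {k T : ℝ} (hk : 0 < k) :
    Tendsto (fun t => k / (T - t)) (𝓝[<] T) atTop := by
  have hgap : Tendsto (fun t => T - t) (𝓝[<] T) (𝓝[>] 0) :=
    tendsto_nhdsWithin_of_tendsto_nhds_of_eventually_within _
      (by simpa using ((continuous_sub_left T).tendsto T).mono_left nhdsWithin_le_nhds)
      (eventually_nhdsWithin_of_forall fun t ht => mem_Ioi.mpr (sub_pos.mpr ht))
  exact ((tendsto_inv_nhdsGT_zero.comp hgap).const_mul_atTop hk).congr fun t =>
    (div_eq_mul_inv _ _).symm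

theorem tendsto_primitive_atTop_of_div_sub_le {q : ℝ → ℝ} {a T k : ℝ} (haT : a < T) (hk : 0 < k)
    (hq : ContinuousOn q (Ico a T)) (hlow : ∀ᶠ t in 𝓝[<] T, k / (T - t) ≤ q t) :
    Tendsto (fun t => ∫ r in a..t, q r) (𝓝[<] T) atTop := by
  obtain ⟨s, hs, hsq⟩ := exists_mem_Ico_forall_of_eventually haT hlow
  have hint : ∀ t ∈ Ico s T, ∫ r in s..t, k / (T - r) = k * Real.log ((T - s) / (T - t)) := by
    intro t ht
    rw [integral_comp_sub_left (fun y => k / y) T]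
    simp only [div_eq_mul_inv, intervalIntegral.integral_const_mul]
    rw [integral_inv_of_pos (by linarith [ht.2]) (by linarith [hs.2]), div_eq_mul_inv]
  have hlog : Tendsto (fun t => (∫ r in a..s, q r) + k * Real.log ((T - s) / (T - t)))
      (𝓝[<] T) atTop :=
    tendsto_atTop_add_const_left _ _ (Tendsto.const_mul_atTop hk
      (Real.tendsto_log_atTop.comp (tendsto_div_sub_nhdsLT_atTop (sub_pos.mpr hs.2))))
  refine tendsto_atTop_mono' _ ?_ hlog
  filter_upwards [Ioo_mem_nhdsLT hs.2] with t ht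
  have hst : s ≤ t := ht.1.le
  rw [← integral_add_adjacent_intervals (hq.intervalIntegrable_of_mem_Ico ⟨le_rfl, haT⟩ hs)
    (hq.intervalIntegrable_of_mem_Ico hs ⟨hs.1.trans hst, ht.2⟩), ← hint t ⟨hst, ht.2⟩]
  gcongr
  refine integral_mono_on hst ?_ (hq.intervalIntegrable_of_mem_Ico hs ⟨hs.1.trans hst, ht.2⟩)
    fun r hr => hsq r ⟨hr.1, hr.2.trans_lt ht.2⟩
  exact (continuousOn_const.div (continuousOn_const.sub continuousOn_id) fun r hr =>
    (sub_pos.mpr (hr.2.trans_lt ht.2)).ne').intervalIntegrable_of_Icc hst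

theorem exists_le_integral_of_eventually_nonneg {q : ℝ → ℝ} {a T : ℝ} (haT : a < T)
    (hq : ContinuousOn q (Ico a T)) (hnn : ∀ᶠ t in 𝓝[<] T, 0 ≤ q t) :
    ∃ B, ∀ s u, a ≤ s → s ≤ u → u < T → B ≤ ∫ r in s..u, q r := by
  obtain ⟨s₀, hs₀, hs₀q⟩ := exists_mem_Ico_forall_of_eventually haT hnn
  -- Only the negative part of `q`, which lives on `[a, s₀]`, can make the integral small.
  have hneg : ContinuousOn (fun r => min (q r) 0) (Ico a T) := hq.inf continuousOn_const
  refine ⟨∫ r in a..s₀, min (q r) 0, fun s u has hsu huT => ?_⟩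
  set v := max u s₀
  have hv : v ∈ Ico a T := ⟨has.trans (hsu.trans (le_max_left _ _)), max_lt huT hs₀.2⟩
  have hs : s ∈ Ico a T := ⟨has, hsu.trans_lt huT⟩
  have hu : u ∈ Ico a T := ⟨has.trans hsu, huT⟩
  have hzero : ∫ r in s₀..v, min (q r) 0 = 0 := by
    refine (integral_congr fun r hr => ?_).trans (integral_zero (a := s₀) (b := v))
    rw [uIcc_of_le (le_max_right _ _)] at hr
    exact min_eq_right (hs₀q r ⟨hr.1, hr.2.trans_lt hv.2⟩)
  calc ∫ r in a..s₀, min (q r) 0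
      = ∫ r in a..v, min (q r) 0 := by
        rw [← integral_add_adjacent_intervals (hneg.intervalIntegrable_of_mem_Ico
          ⟨le_rfl, haT⟩ hs₀) (hneg.intervalIntegrable_of_mem_Ico hs₀ hv), hzero, add_zero]
    _ ≤ ∫ r in s..u, min (q r) 0 := by
        have := integral_mono_interval has hsu (le_max_left u s₀)
          (ae_of_all _ fun r => neg_nonneg.mpr (min_le_right (q r) 0))
          (hneg.intervalIntegrable_of_mem_Ico ⟨le_rfl, haT⟩ hv).neg
        simpa only [intervalIntegral.integral_neg, neg_le_neg_iff] using this
    _ ≤ ∫ r in s..u, q r :=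
        integral_mono_on hsu (hneg.intervalIntegrable_of_mem_Ico hs hu)
          (hq.intervalIntegrable_of_mem_Ico hs hu) fun r _ => min_le_left _ _

theorem integral_exp_primitive_le_div {p : ℝ → ℝ} {a T t₀ t N : ℝ}
    (hp : ContinuousOn p (Ico a T)) (ht₀ : a ≤ t₀) (ht : t₀ ≤ t) (htT : t < T) (hN : 0 < N)
    (hpN : ∀ r ∈ Icc t₀ t, N ≤ p r) :
    ∫ s in t₀..t, Real.exp (∫ r in a..s, p r) ≤ Real.exp (∫ r in a..t, p r) / N := by
  have hsub : Icc t₀ t ⊆ Ico a T := fun r hr => ⟨ht₀.trans hr.1, hr.2.trans_lt htT⟩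
  have hexpP : ContinuousOn (fun s => Real.exp (∫ r in a..s, p r)) (Icc t₀ t) :=
    Real.continuous_exp.comp_continuousOn ((continuousOn_primitive_Ico hp).mono hsub)
  have hcont : ContinuousOn (fun s => Real.exp (∫ r in a..s, p r) * p s) (Icc t₀ t) :=
    hexpP.mul (hp.mono hsub)
  have hftc : ∫ s in t₀..t, Real.exp (∫ r in a..s, p r) * p s =
      Real.exp (∫ r in a..t, p r) - Real.exp (∫ r in a..t₀, p r) :=
    integral_eq_sub_of_hasDerivAt_of_le ht hexpP
      (fun s hs => (hasDerivAt_primitive_of_mem_Ioo hp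
        ⟨ht₀.trans_lt hs.1, hs.2.trans htT⟩).exp)
      (hcont.intervalIntegrable_of_Icc ht)
  calc ∫ s in t₀..t, Real.exp (∫ r in a..s, p r)
      ≤ ∫ s in t₀..t, Real.exp (∫ r in a..s, p r) * p s / N := by
        refine integral_mono_on ht (hexpP.intervalIntegrable_of_Icc ht)
          ((hcont.div_const N).intervalIntegrable_of_Icc ht) fun s hs => ?_
        rw [le_div_iff₀ hN]
        exact mul_le_mul_of_nonneg_left (hpN s hs) (Real.exp_pos _).le
    _ = (Real.exp (∫ r in a..t, p r) - Real.exp (∫ r in a..t₀, p r)) / N := by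
        rw [intervalIntegral.integral_div, hftc]
    _ ≤ Real.exp (∫ r in a..t, p r) / N := by
        gcongr
        linarith [Real.exp_pos (∫ r in a..t₀, p r)]

theorem tendsto_exp_neg_primitive_mul_integral {p Φ : ℝ → ℝ} {a T C : ℝ} (haT : a < T)
    (hp : ContinuousOn p (Ico a T)) (hptop : Tendsto p (𝓝[<] T) atTop)
    (hPtop : Tendsto (fun t => ∫ r in a..t, p r) (𝓝[<] T) atTop)
    (hΦ : ContinuousOn Φ (Ico a T))
    (hΦC : ∀ s ∈ Ico a T, |Φ s| ≤ C * Real.exp (∫ r in a..s, p r)) :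
    Tendsto (fun t => Real.exp (-∫ r in a..t, p r) * ∫ s in a..t, Φ s) (𝓝[<] T) (𝓝 0) := by
  have hC : 0 ≤ C := (mul_nonneg_iff_of_pos_right (Real.exp_pos _)).mp
    ((abs_nonneg _).trans (hΦC a ⟨le_rfl, haT⟩))
  have hdecay : Tendsto (fun t => Real.exp (-∫ r in a..t, p r)) (𝓝[<] T) (𝓝 0) :=
    Real.tendsto_exp_atBot.comp (tendsto_neg_atTop_atBot.comp hPtop)
  rw [Metric.tendsto_nhds]
  intro ε hε
  -- Where `p ≥ N`, the weight `exp (-∫ p)` kills the tail integral up to a factor `1 / N`.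
  set N := 2 * C / ε + 1
  have hN : 0 < N := by positivity
  have hCN : C / N < ε / 2 := by
    rw [div_lt_iff₀ hN]
    have : 2 * C / ε * ε = 2 * C := by field_simp
    nlinarith
  obtain ⟨t₀, ht₀, hpN⟩ := exists_mem_Ico_forall_of_eventually haT (hptop.eventually_ge_atTop N)
  set I₀ := ∫ s in a..t₀, Φ s
  have hhead : ∀ᶠ t in 𝓝[<] T, Real.exp (-∫ r in a..t, p r) * |I₀| < ε / 2 :=
    (by simpa using hdecay.mul_const |I₀| :
      Tendsto (fun t => Real.exp (-∫ r in a..t, p r) * |I₀|) (𝓝[<] T) (𝓝 0)).eventually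
      (gt_mem_nhds (half_pos hε))
  filter_upwards [hhead, Ioo_mem_nhdsLT ht₀.2] with t hheadt ht
  have hsub : Icc t₀ t ⊆ Ico a T := fun r hr => ⟨ht₀.1.trans hr.1, hr.2.trans_lt ht.2⟩
  have htail : |∫ s in t₀..t, Φ s| ≤ C * (Real.exp (∫ r in a..t, p r) / N) := by
    refine (norm_integral_le_of_norm_le (f := Φ)
      (g := fun s => C * Real.exp (∫ r in a..s, p r)) ht.1.le (ae_of_all _ fun s hs =>
        hΦC s (hsub (Ioc_subset_Icc_self hs))) ?_).trans ?_
    · exact (continuousOn_const.mul (Real.continuous_exp.comp_continuousOn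
        ((continuousOn_primitive_Ico hp).mono hsub))).intervalIntegrable_of_Icc ht.1.le
    · rw [intervalIntegral.integral_const_mul]
      exact mul_le_mul_of_nonneg_left (integral_exp_primitive_le_div hp ht₀.1 ht.1.le ht.2 hN
        fun r hr => hpN r ⟨hr.1, hr.2.trans_lt ht.2⟩) hC
  rw [Real.dist_eq, sub_zero, ← integral_add_adjacent_intervals
    ((hΦ.intervalIntegrable_of_mem_Ico ⟨le_rfl, haT⟩ ht₀))
    (hΦ.intervalIntegrable_of_mem_Ico ht₀ ⟨ht₀.1.trans ht.1.le, ht.2⟩), mul_add]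
  calc |Real.exp (-∫ r in a..t, p r) * I₀ + Real.exp (-∫ r in a..t, p r) * ∫ s in t₀..t, Φ s|
      ≤ Real.exp (-∫ r in a..t, p r) * |I₀| +
          Real.exp (-∫ r in a..t, p r) * |∫ s in t₀..t, Φ s| := by
        refine (abs_add_le _ _).trans_eq ?_
        rw [abs_mul, abs_mul, abs_of_pos (Real.exp_pos _)]
    _ ≤ Real.exp (-∫ r in a..t, p r) * |I₀| +
          Real.exp (-∫ r in a..t, p r) * (C * (Real.exp (∫ r in a..t, p r) / N)) := by
        gcongr
    _ = Real.exp (-∫ r in a..t, p r) * |I₀| + C / N := by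
        rw [Real.exp_neg]
        field_simp
    _ < ε := by linarith

section InnerIntegral

variable {q w : ℝ → ℝ} {a T B : ℝ}

theorem abs_integral_mul_exp_neg_integral_le (hw : IntegrableOn w (Icc a T))
    (hB : ∀ s u, a ≤ s → s ≤ u → u < T → B ≤ ∫ r in s..u, q r) {s : ℝ} (hs : s ∈ Ico a T) :
    |∫ u in s..T, w u * Real.exp (-∫ r in s..u, q r)| ≤ Real.exp (-B) * ∫ u in a..T, |w u| := by
  have habs : ∀ b ∈ Icc a T, IntervalIntegrable (fun u => |w u|) volume b T := fun b hb =>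
    ((intervalIntegrable_iff_integrableOn_Icc_of_le hb.2).mpr
      (hw.mono_set (Icc_subset_Icc_left hb.1))).abs
  refine (norm_integral_le_of_norm_le (f := fun u => w u * Real.exp (-∫ r in s..u, q r))
    (g := fun u => Real.exp (-B) * |w u|) hs.2.le ?_
    ((habs s (Ico_subset_Icc_self hs)).const_mul _)).trans ?_
  · filter_upwards [Measure.ae_ne volume T] with u huT hu
    rw [Real.norm_eq_abs, abs_mul, abs_of_pos (Real.exp_pos _), mul_comm]
    gcongr
    exact hB s u hs.1 hu.1.le (lt_of_le_of_ne hu.2 huT)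
  · rw [intervalIntegral.integral_const_mul]
    gcongr
    exact integral_mono_interval hs.1 hs.2.le le_rfl (ae_of_all _ fun u => abs_nonneg _)
      (habs a ⟨le_rfl, hs.1.trans hs.2.le⟩)

theorem continuousOn_integral_mul_exp_neg_integral (hw : IntegrableOn w (Icc a T))
    (hq : ContinuousOn q (Ico a T))
    (hB : ∀ s u, a ≤ s → s ≤ u → u < T → B ≤ ∫ r in s..u, q r) :
    ContinuousOn (fun s => ∫ u in s..T, w u * Real.exp (-∫ r in s..u, q r)) (Ico a T) := by
  have hQ := continuousOn_primitive_Ico hq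
  -- Factoring through the primitive of `q` separates `s` from `u`, so continuity in `s`
  -- reduces to that of a primitive.
  have hfactor : ∀ s ∈ Ico a T, ∫ u in s..T, w u * Real.exp (-∫ r in s..u, q r) =
      Real.exp (∫ r in a..s, q r) * ∫ u in s..T, w u * Real.exp (-∫ r in a..u, q r) := by
    intro s hs
    rw [← intervalIntegral.integral_const_mul, integral_of_le hs.2.le, integral_of_le hs.2.le,
      integral_Ioc_eq_integral_Ioo, integral_Ioc_eq_integral_Ioo]
    refine setIntegral_congr_fun measurableSet_Ioo fun u hu => ?_
    have ha : a ∈ Ico a T := ⟨le_rfl, hs.1.trans_lt hs.2⟩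
    have hu' : u ∈ Ico a T := ⟨hs.1.trans hu.1.le, hu.2⟩
    rw [← integral_interval_sub_left (hq.intervalIntegrable_of_mem_Ico ha hu')
      (hq.intervalIntegrable_of_mem_Ico ha hs), neg_sub, Real.exp_sub, Real.exp_neg]
    field_simp
  intro s hs
  have hwQ : IntegrableOn (fun u => w u * Real.exp (-∫ r in a..u, q r)) (uIcc a T) := by
    rw [uIcc_of_le (hs.1.trans hs.2.le), integrableOn_Icc_iff_integrableOn_Ico]
    refine (hw.mono_set Ico_subset_Icc_self).mul_bdd (c := Real.exp (-B))
      ((Real.continuous_exp.comp_continuousOn hQ.neg).aestronglyMeasurable measurableSet_Ico)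
      (ae_restrict_of_forall_mem measurableSet_Ico fun u hu => ?_)
    rw [Real.norm_eq_abs, abs_of_pos (Real.exp_pos _)]
    gcongr
    exact hB a u le_rfl hu.1 hu.2
  refine ContinuousOn.congr ?_ hfactor s hs
  exact (Real.continuous_exp.comp_continuousOn hQ).mul
    ((continuousOn_primitive_interval_left hwQ).mono (Ico_subset_Icc_self.trans Icc_subset_uIcc))

end InnerIntegral

theorem tendsto_variationOfConstants_zero {p q w ψ : ℝ → ℝ} {a T k x : ℝ} (haT : a < T)
    (hk : 0 < k) (hp : ContinuousOn p (Ico a T)) (hpk : ∀ᶠ t in 𝓝[<] T, k / (T - t) ≤ p t)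
    (hq : ContinuousOn q (Ico a T)) (hq0 : ∀ᶠ t in 𝓝[<] T, 0 ≤ q t)
    (hψ : ContinuousOn ψ (Icc a T)) (hw : IntegrableOn w (Icc a T)) :
    Tendsto (fun t => x * Real.exp (-∫ r in a..t, p r) - ∫ s in a..t, ψ s *
        Real.exp (-∫ r in s..t, p r) * ∫ u in s..T, w u * Real.exp (-∫ r in s..u, q r))
      (𝓝[<] T) (𝓝 0) := by
  obtain ⟨B, hB⟩ := exists_le_integral_of_eventually_nonneg haT hq hq0
  obtain ⟨M, hM⟩ := isCompact_Icc.exists_bound_of_continuousOn hψ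
  have hPtop := tendsto_primitive_atTop_of_div_sub_le haT hk hp hpk
  have hdecay : Tendsto (fun t => Real.exp (-∫ r in a..t, p r)) (𝓝[<] T) (𝓝 0) :=
    Real.tendsto_exp_atBot.comp (tendsto_neg_atTop_atBot.comp hPtop)
  have hΦcont : ContinuousOn (fun s => ψ s * Real.exp (∫ r in a..s, p r) *
      ∫ u in s..T, w u * Real.exp (-∫ r in s..u, q r)) (Ico a T) :=
    ((hψ.mono Ico_subset_Icc_self).mul (Real.continuous_exp.comp_continuousOn
      (continuousOn_primitive_Ico hp))).mul (continuousOn_integral_mul_exp_neg_integral hw hq hB)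
  have hΦbound : ∀ s ∈ Ico a T,
      |ψ s * Real.exp (∫ r in a..s, p r) * ∫ u in s..T, w u * Real.exp (-∫ r in s..u, q r)| ≤
        M * (Real.exp (-B) * ∫ u in a..T, |w u|) * Real.exp (∫ r in a..s, p r) := by
    intro s hs
    have hψs := hM s (Ico_subset_Icc_self hs)
    rw [abs_mul, abs_mul, abs_of_pos (Real.exp_pos _), mul_right_comm]
    gcongr
    · exact (norm_nonneg _).trans hψs
    · exact hψs
    · exact abs_integral_mul_exp_neg_integral_le hw hB hs
  have hlim := (hdecay.const_mul x).sub (tendsto_exp_neg_primitive_mul_integral haT hp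
    (tendsto_atTop_mono' _ hpk (tendsto_div_sub_nhdsLT_atTop hk)) hPtop hΦcont hΦbound)
  rw [mul_zero, sub_zero] at hlim
  refine hlim.congr' ?_
  filter_upwards [Ioo_mem_nhdsLT haT] with t ht
  rw [← intervalIntegral.integral_const_mul]
  congr 1
  refine integral_congr fun s hs => ?_
  rw [uIcc_of_le ht.1.le] at hs
  simp only [← integral_interval_sub_left (hp.intervalIntegrable_of_mem_Ico ⟨le_rfl, haT⟩
    ⟨ht.1.le, ht.2⟩) (hp.intervalIntegrable_of_mem_Ico ⟨le_rfl, haT⟩ ⟨hs.1, hs.2.trans_lt ht.2⟩),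
    neg_sub, Real.exp_sub, Real.exp_neg]
  ring

namespace Coeffs

variable {T : ℝ} (C : Coeffs T)

theorem continuousOn_kap : ContinuousOn C.kap (Icc 0 T) :=
  fun r hr => (C.kap_hasDeriv r hr).continuousWithinAt

theorem continuousOn_eta_s6 : ContinuousOn C.eta (Icc 0 T) :=
  fun r hr => (C.eta_hasDeriv r hr).continuousWithinAt

theorem integrableOn_lam : IntegrableOn C.lam (Icc 0 T) := by
  obtain ⟨M, hM⟩ := C.lam_bdd
  exact Measure.integrableOn_of_bounded measure_Icc_lt_top.ne C.lam_meas.aestronglyMeasurable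
    (ae_restrict_of_forall_mem measurableSet_Icc fun t ht =>
      (hM t ht).trans_eq' (Real.norm_eq_abs _))

end Coeffs

namespace IsRiccatiSol

variable {T δ : ℝ} {C : Coeffs T} {A : ℝ → ℝ}

theorem sub_le_integral_sq (hA : IsRiccatiSol T δ C A) (hδ : 0 ≤ δ) {m s₀ : ℝ} (hs₀ : 0 ≤ s₀)
    (hm : ∀ r ∈ Icc 0 T, (C.eta r)⁻¹ ≤ m) (hA0 : ∀ r ∈ Ico s₀ T, 0 ≤ A r) :
    ∀ x ∈ Ico s₀ T, ∀ z ∈ Ioo x T, A z - A x ≤ ∫ r in x..z, m * A r ^ 2 := by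
  intro x hx z hz
  have hx' : x ∈ Ico 0 T := ⟨hs₀.trans hx.1, hx.2⟩
  have hz' : z ∈ Ico 0 T := ⟨hx'.1.trans hz.1.le, hz.2⟩
  have hsub : Icc x z ⊆ Icc 0 T := Icc_subset_Icc hx'.1 hz.2.le
  have hη := C.continuousOn_eta_s6.mono Ico_subset_Icc_self
  have hηne : ∀ r ∈ Ico (0 : ℝ) T, C.eta r ≠ 0 :=
    fun r hr => (C.eta_pos r (Ico_subset_Icc_self hr)).ne'
  have hquad : ContinuousOn (fun r => A r ^ 2 / C.eta r - δ * (C.kap r / C.eta r) * A r)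
      (Ico 0 T) :=
    ((hA.1.pow 2).div hη hηne).sub ((continuousOn_const.mul
      ((C.continuousOn_kap.mono Ico_subset_Icc_self).div hη hηne)).mul hA.1)
  rw [hA.2.1 x hx' z hz', add_sub_cancel_left]
  refine integral_mono_on hz.1.le ((hquad.intervalIntegrable_of_mem_Ico hx' hz').sub
    ((intervalIntegrable_iff_integrableOn_Icc_of_le hz.1.le).mpr
      (C.integrableOn_lam.mono_set hsub)))
    ((continuousOn_const.mul (hA.1.pow 2)).intervalIntegrable_of_mem_Ico hx' hz') fun r hr => ?_
  have hr' := hsub hr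
  have hdamp : 0 ≤ δ * (C.kap r / C.eta r) * A r :=
    mul_nonneg (mul_nonneg hδ (div_nonneg (C.kap_nonneg r hr') (C.eta_pos r hr').le))
      (hA0 r ⟨hx.1.trans hr.1, hr.2.trans_lt hz.2⟩)
  have hsq : A r ^ 2 / C.eta r ≤ m * A r ^ 2 := by
    rw [div_eq_mul_inv, mul_comm]
    exact mul_le_mul_of_nonneg_right (hm r hr') (sq_nonneg _)
  linarith [C.lam_nonneg r hr']

theorem exists_div_sub_le (hA : IsRiccatiSol T δ C A) (hT : 0 < T) (hδ : 0 ≤ δ) :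
    ∃ k > 0, ∀ᶠ t in 𝓝[<] T, k / (T - t) ≤ A t := by
  obtain ⟨m, hm⟩ := isCompact_Icc.exists_bound_of_continuousOn
    (C.continuousOn_eta_s6.inv₀ fun r hr => (C.eta_pos r hr).ne')
  have hm' : ∀ r ∈ Icc 0 T, (C.eta r)⁻¹ ≤ m := fun r hr => (le_abs_self _).trans (hm r hr)
  have hm0 : 0 < m := (inv_pos.mpr (C.eta_pos 0 ⟨le_rfl, hT.le⟩)).trans_le (hm' 0 ⟨le_rfl, hT.le⟩)
  obtain ⟨s₀, hs₀, hA1⟩ := exists_mem_Ico_forall_of_eventually hT (hA.2.2.eventually_ge_atTop 1)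
  refine ⟨m⁻¹, inv_pos.mpr hm0, ?_⟩
  filter_upwards [Ico_mem_nhdsLT hs₀.2] with s hs
  have hrate := one_le_mul_mul_sub_of_sub_le_integral_sq hm0 hs.2
    (hA.1.mono (Ico_subset_Ico_left (hs₀.1.trans hs.1)))
    (fun x hx => hA.sub_le_integral_sq hδ hs₀.1 hm' (fun r hr => zero_le_one.trans (hA1 r hr))
      x ⟨hs.1.trans hx.1, hx.2⟩) hA.2.2 (one_pos.trans_le (hA1 s hs))
  rw [div_le_iff₀ (sub_pos.mpr hs.2), inv_eq_one_div, div_le_iff₀ hm0]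
  linarith

theorem exists_div_sub_le_rate (hA : IsRiccatiSol T δ C A) (hT : 0 < T) (hδ : δ ∈ Icc 0 1) :
    ∃ k > 0, ∀ᶠ t in 𝓝[<] T, k / (T - t) ≤ (A t - δ * C.kap t) / C.eta t := by
  obtain ⟨k, hk, hkA⟩ := hA.exists_div_sub_le hT hδ.1
  obtain ⟨K, hK⟩ := isCompact_Icc.exists_bound_of_continuousOn C.continuousOn_kap
  obtain ⟨E, hE⟩ := isCompact_Icc.exists_bound_of_continuousOn C.continuousOn_eta_s6
  have hE' : ∀ r ∈ Icc 0 T, C.eta r ≤ E := fun r hr => (le_abs_self _).trans (hE r hr)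
  have hE0 : 0 < E := (C.eta_pos 0 ⟨le_rfl, hT.le⟩).trans_le (hE' 0 ⟨le_rfl, hT.le⟩)
  refine ⟨k / (2 * E), by positivity, ?_⟩
  filter_upwards [hkA, hA.2.2.eventually_ge_atTop (2 * K), Ioo_mem_nhdsLT hT] with t hkt hKt ht
  have ht' : t ∈ Icc 0 T := Ioo_subset_Icc_self ht
  have hκ : δ * C.kap t ≤ A t / 2 := by
    have := (le_abs_self _).trans (hK t ht')
    nlinarith [C.kap_nonneg t ht', hδ.1, hδ.2]
  calc k / (2 * E) / (T - t) = k / (T - t) / 2 / E := by ring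
    _ ≤ A t / 2 / C.eta t := by
        gcongr
        · linarith [(div_pos hk (sub_pos.mpr ht.2)).le.trans hkt]
        · exact C.eta_pos t ht'
        · exact hE' t ht'
    _ ≤ (A t - δ * C.kap t) / C.eta t := by
        gcongr
        · exact (C.eta_pos t ht').le
        · linarith

theorem eventually_nonneg_div (hA : IsRiccatiSol T δ C A) (hT : 0 < T) :
    ∀ᶠ t in 𝓝[<] T, 0 ≤ A t / C.eta t := by
  filter_upwards [hA.2.2.eventually_ge_atTop 0, Ioo_mem_nhdsLT hT] with t hAt ht
  exact div_nonneg hAt (C.eta_pos t (Ioo_subset_Icc_self ht)).le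

end IsRiccatiSol

/-- If `τ_μ(x) = T`, then the explicitly given portfolio process `X`
satisfies `lim_{t↗T} X_t = 0`. -/
theorem stmt_6 (T : ℝ) (hT : 0 < T) (C : Coeffs T)
    (δ : ℝ) (hδ : δ ∈ Set.Icc (0:ℝ) 1)
    (A : ℝ → ℝ) (hA : IsRiccatiSol T δ C A)
    (μ : ℝ → ℝ) (hμ : MeasureTheory.IntegrableOn μ (Set.Icc 0 T))
    (x : ℝ) (X : ℝ → ℝ)
    (hX : ∀ t : ℝ, X t = if t ≤ tauMu T δ C A μ x then
        x * Real.exp (-∫ r in (0:ℝ)..t, (A r - δ * C.kap r) / C.eta r)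
          - ∫ s in (0:ℝ)..t, (1 / C.eta s)
              * Real.exp (-∫ r in s..t, (A r - δ * C.kap r) / C.eta r)
              * ∫ u in s..(tauMu T δ C A μ x),
                  C.kap u * μ u * Real.exp (-∫ r in s..u, A r / C.eta r)
      else 0)
    (hτ : tauMu T δ C A μ x = T) :
    Filter.Tendsto X (nhdsWithin T (Set.Iio T)) (nhds 0) := by
  rw [hτ] at hX
  have hη := C.continuousOn_eta_s6.mono Ico_subset_Icc_self
  have hηne : ∀ r ∈ Ico (0 : ℝ) T, C.eta r ≠ 0 :=
    fun r hr => (C.eta_pos r (Ico_subset_Icc_self hr)).ne'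
  obtain ⟨k, hk, hkp⟩ := hA.exists_div_sub_le_rate hT hδ
  refine (tendsto_variationOfConstants_zero (p := fun r => (A r - δ * C.kap r) / C.eta r)
    (q := fun r => A r / C.eta r) (w := fun u => C.kap u * μ u) (ψ := fun s => 1 / C.eta s)
    (x := x) hT hk
    ((hA.1.sub (continuousOn_const.mul (C.continuousOn_kap.mono Ico_subset_Icc_self))).div hη hηne)
    hkp (hA.1.div hη hηne) (hA.eventually_nonneg_div hT)
    (continuousOn_const.div C.continuousOn_eta_s6 fun r hr => (C.eta_pos r hr).ne')
    (hμ.continuousOn_mul C.continuousOn_kap isCompact_Icc)).congr' ?_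
  filter_upwards [self_mem_nhdsWithin] with t ht
  rw [hX t, if_pos (le_of_lt ht)]

end
end
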